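/- Let r₀ < r₁ be reals, let K: {(r,s) : r₀ ≤ s ≤ r ≤ r₁} → ℂ be continuous with K(s,s) = 0, let g: [r₀,r₁] → ℂ be continuous and nowhere vanishing, and set K₁(r,s) := g(r)^{−1} K(r,s) g(s). Suppose there is κ ≥ 0 such that ∫_{r₀}^{r} sup_{r̃ ∈ [s,r]} |K₁(r̃,s)| ds ≤ κ for all r ∈ [r₀,r₁]. Then there exists a continuous function f: [r₀,r₁] → ℂ solving the Volterra integral equation f(r) = g(r) + ∫_{r₀}^{r} K(r,s) f(s) ds, and it satisfies |f(r) − g(r)| ≤ (e^κ − 1)·|g(r)| for all r ∈ [r₀,r₁]. -/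

import Mathlib

open MeasureTheory Set

section AuxStmt10

/-- Continuity of a parametrized supremum over a compact interval. -/
lemma contSup_aux {φ : ℝ → ℝ → ℝ} (hφ : Continuous fun p : ℝ × ℝ => φ p.1 p.2)
    {a b : ℝ} (hab : a ≤ b) :
    Continuous fun s : ℝ => sSup ((fun t => φ t s) '' Set.Icc a b) := by
  have hne : ∀ s : ℝ, ((fun t => φ t s) '' Set.Icc a b).Nonempty :=
    fun s => (Set.nonempty_Icc.2 hab).image _
  have hbdd : ∀ s : ℝ, BddAbove ((fun t => φ t s) '' Set.Icc a b) := fun s =>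
    (isCompact_Icc.image (hφ.comp (continuous_id.prodMk continuous_const))).bddAbove
  rw [Metric.continuous_iff]
  intro s ε hε
  have hK : IsCompact (Set.Icc a b ×ˢ Set.Icc (s - 1) (s + 1)) :=
    isCompact_Icc.prod isCompact_Icc
  have hu := hK.uniformContinuousOn_of_continuous hφ.continuousOn
  rw [Metric.uniformContinuousOn_iff] at hu
  obtain ⟨δ, hδpos, hδ⟩ := hu (ε / 2) (by positivity)
  refine ⟨min δ 1, by positivity, fun s' hs' => ?_⟩
  have hdδ : |s' - s| < δ := by
    have := hs'.trans_le (min_le_left _ _); rwa [Real.dist_eq] at this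
  have hd1 : |s' - s| < 1 := by
    have := hs'.trans_le (min_le_right _ _); rwa [Real.dist_eq] at this
  have habs := abs_lt.1 hd1
  have hmem' : s' ∈ Set.Icc (s - 1) (s + 1) := ⟨by linarith [habs.1], by linarith [habs.2]⟩
  have hmem : s ∈ Set.Icc (s - 1) (s + 1) := ⟨by linarith, by linarith⟩
  have key : ∀ t ∈ Set.Icc a b, |φ t s' - φ t s| ≤ ε / 2 := by
    intro t ht
    have hd : dist ((t, s') : ℝ × ℝ) (t, s) < δ := by
      rw [Prod.dist_eq]
      simp only [dist_self]
      rw [max_eq_right (dist_nonneg)]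
      rwa [Real.dist_eq]
    have := hδ (t, s') ⟨ht, hmem'⟩ (t, s) ⟨ht, hmem⟩ hd
    rw [Real.dist_eq] at this
    exact this.le
  have h1 : sSup ((fun t => φ t s') '' Set.Icc a b) ≤
      sSup ((fun t => φ t s) '' Set.Icc a b) + ε / 2 := by
    apply csSup_le (hne s')
    rintro x ⟨t, ht, rfl⟩
    have h2 : φ t s ≤ sSup ((fun t => φ t s) '' Set.Icc a b) :=
      le_csSup (hbdd s) ⟨t, ht, rfl⟩
    have := abs_le.1 (key t ht)
    linarith [this.2]
  have h2 : sSup ((fun t => φ t s) '' Set.Icc a b) ≤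
      sSup ((fun t => φ t s') '' Set.Icc a b) + ε / 2 := by
    apply csSup_le (hne s)
    rintro x ⟨t, ht, rfl⟩
    have h2 : φ t s' ≤ sSup ((fun t => φ t s') '' Set.Icc a b) :=
      le_csSup (hbdd s') ⟨t, ht, rfl⟩
    have := abs_le.1 (key t ht)
    linarith [this.1]
  rw [Real.dist_eq, abs_lt]
  constructor <;> linarith

/-- The Picard iterates for the Volterra equation. -/
noncomputable def volIter (r₀ : ℝ) (Ke : ℝ → ℝ → ℂ) : ℕ → ℝ → ℂ
  | 0 => fun _ => 1
  | n + 1 => fun r => ∫ s in r₀..r, Ke r s * volIter r₀ Ke n s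

lemma volIter_cont (r₀ : ℝ) {Ke : ℝ → ℝ → ℂ} (hKe : Continuous fun p : ℝ × ℝ => Ke p.1 p.2) :
    ∀ n, Continuous (volIter r₀ Ke n)
  | 0 => continuous_const
  | (n + 1) => by
    have ih := volIter_cont r₀ hKe n
    have hc : Continuous (Function.uncurry fun r s => Ke r s * volIter r₀ Ke n s) :=
      hKe.mul (ih.comp continuous_snd)
    exact intervalIntegral.continuous_parametric_intervalIntegral_of_continuous hc continuous_id

end AuxStmt10

lemma volIter_zero (r₀ : ℝ) (Ke : ℝ → ℝ → ℂ) (r : ℝ) : volIter r₀ Ke 0 r = 1 := rfl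

lemma volIter_succ (r₀ : ℝ) (Ke : ℝ → ℝ → ℂ) (n : ℕ) (r : ℝ) :
    volIter r₀ Ke (n + 1) r = ∫ s in r₀..r, Ke r s * volIter r₀ Ke n s := rfl

set_option maxHeartbeats 1000000 in
/-- Solvability of the Volterra integral equation `f(r) = g(r) + ∫_{r₀}^r K(r,s) f(s) ds`
on `[r₀, r₁]`, with the remainder bound `|f - g| ≤ (e^κ - 1)|g|`, under the smallness
condition `∫_{r₀}^r sup_{rt∈[s,r]} |g(rt)⁻¹ K(rt,s) g(s)| ds ≤ κ`. -/
theorem stmt10 (r₀ r₁ : ℝ) (h01 : r₀ < r₁)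
    (K : ℝ → ℝ → ℂ)
    (hK : ContinuousOn (fun p : ℝ × ℝ => K p.1 p.2)
      {p : ℝ × ℝ | r₀ ≤ p.2 ∧ p.2 ≤ p.1 ∧ p.1 ≤ r₁})
    (hKdiag : ∀ s ∈ Set.Icc r₀ r₁, K s s = 0)
    (g : ℝ → ℂ) (hg : ContinuousOn g (Set.Icc r₀ r₁))
    (hg0 : ∀ r ∈ Set.Icc r₀ r₁, g r ≠ 0)
    (κ : ℝ) (hκ : 0 ≤ κ)
    (hint : ∀ r ∈ Set.Icc r₀ r₁,
      (∫ s in r₀..r, sSup ((fun rt : ℝ => ‖(g rt)⁻¹ * K rt s * g s‖) '' Set.Icc s r)) ≤ κ) :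
    ∃ f : ℝ → ℂ, ContinuousOn f (Set.Icc r₀ r₁) ∧
      (∀ r ∈ Set.Icc r₀ r₁, f r = g r + ∫ s in r₀..r, K r s * f s) ∧
      (∀ r ∈ Set.Icc r₀ r₁, ‖f r - g r‖ ≤ (Real.exp κ - 1) * ‖g r‖) := by
  -- clamping to `[r₀, r₁]`
  set proj : ℝ → ℝ := fun r => max r₀ (min r r₁) with hproj_def
  have hprojc : Continuous proj := continuous_const.max (continuous_id.min continuous_const)
  have hproj_mem : ∀ r, proj r ∈ Set.Icc r₀ r₁ :=
    fun r => ⟨le_max_left _ _, max_le h01.le (min_le_right _ _)⟩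
  have hproj_id : ∀ r ∈ Set.Icc r₀ r₁, proj r = r := by
    intro r hr
    simp only [hproj_def, min_eq_left hr.2, max_eq_right hr.1]
  have hproj_mono : Monotone proj := fun x y hxy =>
    max_le_max le_rfl (min_le_min hxy le_rfl)
  -- the conjugated kernel, extended continuously to the whole plane
  set T : Set (ℝ × ℝ) := {p : ℝ × ℝ | r₀ ≤ p.2 ∧ p.2 ≤ p.1 ∧ p.1 ≤ r₁} with hT_def
  set K₁ : ℝ × ℝ → ℂ := fun p => (g p.1)⁻¹ * K p.1 p.2 * g p.2 with hK₁_def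
  have hK₁ : ContinuousOn K₁ T := by
    have h1 : ContinuousOn (fun p : ℝ × ℝ => g p.1) T :=
      hg.comp continuous_fst.continuousOn
        (fun p hp => ⟨hp.1.trans hp.2.1, hp.2.2⟩)
    have h2 : ContinuousOn (fun p : ℝ × ℝ => g p.2) T :=
      hg.comp continuous_snd.continuousOn
        (fun p hp => ⟨hp.1, hp.2.1.trans hp.2.2⟩)
    exact ((h1.inv₀ fun p hp => hg0 _ ⟨hp.1.trans hp.2.1, hp.2.2⟩).mul hK).mul h2
  set Ke : ℝ → ℝ → ℂ := fun r s => K₁ (max (proj r) (proj s), proj s) with hKe_def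
  have hKe : Continuous fun p : ℝ × ℝ => Ke p.1 p.2 := by
    have hψ : Continuous fun p : ℝ × ℝ => ((max (proj p.1) (proj p.2), proj p.2) : ℝ × ℝ) :=
      ((hprojc.comp continuous_fst).max (hprojc.comp continuous_snd)).prodMk
        (hprojc.comp continuous_snd)
    exact hK₁.comp_continuous hψ fun p =>
      ⟨(hproj_mem p.2).1, le_max_right _ _, max_le (hproj_mem p.1).2 (hproj_mem p.2).2⟩
  have f1 : ∀ r s : ℝ, r₀ ≤ s → s ≤ r → r ≤ r₁ → Ke r s = (g r)⁻¹ * K r s * g s := by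
    intro r s h1 h2 h3
    have hs : s ∈ Set.Icc r₀ r₁ := ⟨h1, h2.trans h3⟩
    have hr : r ∈ Set.Icc r₀ r₁ := ⟨h1.trans h2, h3⟩
    simp only [hKe_def, hproj_id s hs, hproj_id r hr, max_eq_left h2, hK₁_def]
  have f2 : ∀ t s : ℝ, t ≤ s → Ke t s = 0 := by
    intro t s hts
    have : max (proj t) (proj s) = proj s := max_eq_right (hproj_mono hts)
    simp only [hKe_def, this, hK₁_def]
    rw [hKdiag _ (hproj_mem s)]
    ring
  clear_value Ke
  clear_value K₁
  clear_value proj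
  -- slicewise continuity of the kernel
  have hKeSlice1 : ∀ s : ℝ, Continuous fun t => Ke t s := by
    intro s
    have h1 : Continuous fun t : ℝ => ((t, s) : ℝ × ℝ) := continuous_id.prodMk continuous_const
    exact hKe.comp h1
  have hKeSlice2 : ∀ r : ℝ, Continuous fun s => Ke r s := by
    intro r
    have h1 : Continuous fun s : ℝ => ((r, s) : ℝ × ℝ) := continuous_const.prodMk continuous_id
    exact hKe.comp h1
  have hKeSliceCont : ∀ s : ℝ, Continuous fun t => ‖Ke t s‖ := fun s => (hKeSlice1 s).norm
  -- the majorant `Mc`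
  set Mc : ℝ → ℝ := fun s => sSup ((fun t => ‖Ke t s‖) '' Set.Icc r₀ r₁) with hMc_def
  have hMc : Continuous Mc := by
    have h := contSup_aux (φ := fun t s => ‖Ke t s‖) hKe.norm (a := r₀) (b := r₁) h01.le
    rw [hMc_def]
    exact h
  have hMcbdd : ∀ s : ℝ, BddAbove ((fun t => ‖Ke t s‖) '' Set.Icc r₀ r₁) := fun s =>
    (isCompact_Icc.image (hKeSliceCont s)).bddAbove
  have hMcb : ∀ r s : ℝ, r ∈ Set.Icc r₀ r₁ → ‖Ke r s‖ ≤ Mc s := by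
    intro r s hr
    rw [hMc_def]
    exact le_csSup (hMcbdd s) ⟨r, hr, rfl⟩
  have hMc0 : ∀ s, 0 ≤ Mc s := fun s =>
    (norm_nonneg _).trans (hMcb r₀ s ⟨le_rfl, h01.le⟩)
  -- `Mc` agrees on `[r₀, r₁]` with the integrand in the hypothesis `hint` at `r = r₁`
  have claimA : ∀ s ∈ Set.Icc r₀ r₁,
      Mc s = sSup ((fun rt : ℝ => ‖(g rt)⁻¹ * K rt s * g s‖) '' Set.Icc s r₁) := by
    intro s hs
    have himg : (fun rt : ℝ => ‖(g rt)⁻¹ * K rt s * g s‖) '' Set.Icc s r₁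
        = (fun t => ‖Ke t s‖) '' Set.Icc s r₁ := by
      apply Set.image_congr
      intro t ht
      rw [f1 t s hs.1 ht.1 ht.2]
    rw [himg, hMc_def]
    have hbddS : BddAbove ((fun t => ‖Ke t s‖) '' Set.Icc s r₁) :=
      (isCompact_Icc.image (hKeSliceCont s)).bddAbove
    have hneS : ((fun t => ‖Ke t s‖) '' Set.Icc s r₁).Nonempty :=
      (Set.nonempty_Icc.2 hs.2).image _
    apply le_antisymm
    · apply csSup_le ((Set.nonempty_Icc.2 h01.le).image _)
      rintro x ⟨t, ht, rfl⟩
      beta_reduce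
      rcases le_total t s with h | h
      · rw [f2 t s h]
        simp only [norm_zero]
        calc (0 : ℝ) ≤ ‖Ke s s‖ := norm_nonneg _
          _ ≤ sSup ((fun t => ‖Ke t s‖) '' Set.Icc s r₁) :=
            le_csSup hbddS ⟨s, ⟨le_rfl, hs.2⟩, rfl⟩
      · exact le_csSup hbddS ⟨t, ⟨h, ht.2⟩, rfl⟩
    · exact csSup_le_csSup (hMcbdd s) hneS
        (Set.image_mono (Set.Icc_subset_Icc hs.1 le_rfl))
  clear_value Mc
  -- the primitive `F` of `Mc`
  set F : ℝ → ℝ := fun r => ∫ s in r₀..r, Mc s with hF_def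
  have hMcInt : ∀ a b : ℝ, IntervalIntegrable Mc volume a b := fun a b =>
    hMc.intervalIntegrable a b
  have hFder : ∀ r : ℝ, HasDerivAt F (Mc r) r := by
    intro r
    rw [hF_def]
    exact intervalIntegral.integral_hasDerivAt_right (hMcInt _ _)
      (hMc.stronglyMeasurableAtFilter _ _) hMc.continuousAt
  have hFr₀ : F r₀ = 0 := by rw [hF_def]; exact intervalIntegral.integral_same
  have hF0 : ∀ r ∈ Set.Icc r₀ r₁, 0 ≤ F r := by
    intro r hr
    rw [hF_def]
    exact intervalIntegral.integral_nonneg hr.1 fun u _ => hMc0 u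
  have hFκ : ∀ r ∈ Set.Icc r₀ r₁, F r ≤ κ := by
    intro r hr
    have hsplit : F r + ∫ s in r..r₁, Mc s = F r₁ := by
      rw [hF_def]
      exact intervalIntegral.integral_add_adjacent_intervals (hMcInt _ _) (hMcInt _ _)
    have hpos : 0 ≤ ∫ s in r..r₁, Mc s :=
      intervalIntegral.integral_nonneg hr.2 fun u _ => hMc0 u
    have hFr1 : F r₁ ≤ κ := by
      have heq1 : F r₁ = ∫ s in r₀..r₁,
          sSup ((fun rt : ℝ => ‖(g rt)⁻¹ * K rt s * g s‖) '' Set.Icc s r₁) := by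
        rw [hF_def]
        apply intervalIntegral.integral_congr
        intro s hsm
        rw [Set.uIcc_of_le h01.le] at hsm
        exact claimA s hsm
      rw [heq1]
      exact hint r₁ ⟨h01.le, le_rfl⟩
    linarith
  have hFcont : Continuous F := continuous_iff_continuousAt.2 fun r => (hFder r).continuousAt
  clear_value F
  -- the Picard iterates
  set H : ℕ → ℝ → ℂ := volIter r₀ Ke with hH_def
  have hHcont : ∀ n, Continuous (H n) := by
    intro n
    rw [hH_def]
    exact volIter_cont r₀ hKe n
  have hH0 : ∀ r, H 0 r = 1 := by
    intro r; rw [hH_def]; exact volIter_zero r₀ Ke r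
  have hHsucc : ∀ n r, H (n + 1) r = ∫ s in r₀..r, Ke r s * H n s := by
    intro n r
    rw [hH_def]
    exact volIter_succ r₀ Ke n r
  clear_value H
  -- the key iterated bound
  have hb : ∀ n, ∀ r ∈ Set.Icc r₀ r₁, ‖H n r‖ ≤ F r ^ n / n.factorial := by
    intro n
    induction n with
    | zero =>
      intro r hr
      rw [hH0 r]
      simp
    | succ n ih =>
      intro r hr
      have hint1 : IntervalIntegrable (fun s => ‖Ke r s * H n s‖) volume r₀ r :=
        (((hKeSlice2 r).mul (hHcont n)).norm).intervalIntegrable _ _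
      have hint2 : IntervalIntegrable (fun s => Mc s * (F s ^ n / n.factorial)) volume r₀ r :=
        (hMc.mul ((hFcont.pow n).div_const _)).intervalIntegrable _ _
      have hkey : (∫ s in r₀..r, Mc s * F s ^ n) = F r ^ (n + 1) / ((n : ℝ) + 1) := by
        have hG : ∀ s ∈ Set.uIcc r₀ r,
            HasDerivAt (fun u => F u ^ (n + 1) / ((n : ℝ) + 1)) (Mc s * F s ^ n) s := by
          intro s _
          have h1 := ((hFder s).pow (n + 1)).div_const ((n : ℝ) + 1)
          refine h1.congr_deriv ?_
          have hne : ((n : ℝ) + 1) ≠ 0 := by positivity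
          push_cast
          field_simp
        have hFTC := intervalIntegral.integral_eq_sub_of_hasDerivAt hG
          ((hMc.mul (hFcont.pow n)).intervalIntegrable _ _)
        rw [hFTC, hFr₀]
        norm_num
      calc ‖H (n + 1) r‖ = ‖∫ s in r₀..r, Ke r s * H n s‖ := by rw [hHsucc]
        _ ≤ ∫ s in r₀..r, ‖Ke r s * H n s‖ :=
          intervalIntegral.norm_integral_le_integral_norm hr.1
        _ ≤ ∫ s in r₀..r, Mc s * (F s ^ n / n.factorial) := by
          apply intervalIntegral.integral_mono_on hr.1 hint1 hint2
          intro s hs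
          rw [norm_mul]
          exact mul_le_mul (hMcb r s hr) (ih s ⟨hs.1, hs.2.trans hr.2⟩)
            (norm_nonneg _) (hMc0 s)
        _ = (∫ s in r₀..r, Mc s * F s ^ n) / n.factorial := by
          simp_rw [← mul_div_assoc]
          rw [intervalIntegral.integral_div]
        _ = (F r ^ (n + 1) / ((n : ℝ) + 1)) / n.factorial := by rw [hkey]
        _ = F r ^ (n + 1) / (n + 1).factorial := by
          rw [Nat.factorial_succ]
          push_cast
          field_simp
  -- uniform bounds by `κ^n / n!`
  have hbκ : ∀ n, ∀ r ∈ Set.Icc r₀ r₁, ‖H n r‖ ≤ κ ^ n / n.factorial := by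
    intro n r hr
    refine (hb n r hr).trans ?_
    gcongr
    · exact hF0 r hr
    · exact hFκ r hr
  have hu : Summable (fun n : ℕ => κ ^ n / n.factorial) := Real.summable_pow_div_factorial κ
  have hsum : ∀ r ∈ Set.Icc r₀ r₁, Summable fun n => H n r := fun r hr =>
    Summable.of_norm_bounded hu fun n => hbκ n r hr
  -- the solution of the conjugated equation
  set h : ℝ → ℂ := fun r => ∑' n, H n r with hh_def
  have hh : ∀ r, h r = ∑' n, H n r := by intro r; rw [hh_def]
  have hhcont : ContinuousOn h (Set.Icc r₀ r₁) := by
    rw [hh_def]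
    have ht := tendstoUniformlyOn_tsum (f := fun n r => H n r) hu
      (s := Set.Icc r₀ r₁) (fun n r hr => hbκ n r hr)
    exact ht.continuousOn (Filter.Eventually.of_forall fun t =>
      (continuous_finset_sum _ fun n _ => hHcont n).continuousOn).frequently
  clear_value h
  -- the integral equation for `h`
  have heq : ∀ r ∈ Set.Icc r₀ r₁, (∫ s in r₀..r, Ke r s * h s) = h r - 1 := by
    intro r hr
    have hIntn : ∀ n, IntegrableOn (fun s => Ke r s * H n s) (Set.Ioc r₀ r) volume := fun n =>
      (((hKeSlice2 r).mul (hHcont n)).integrableOn_Icc).mono_set Set.Ioc_subset_Icc_self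
    obtain ⟨C, hC⟩ := (isCompact_Icc (a := r₀) (b := r)).exists_bound_of_continuousOn
      ((hKeSlice2 r).continuousOn)
    have hC0 : 0 ≤ C := (norm_nonneg _).trans (hC r₀ ⟨le_rfl, hr.1⟩)
    have hnormle : ∀ n, (∫ s in Set.Ioc r₀ r, ‖Ke r s * H n s‖)
        ≤ C * (κ ^ n / n.factorial) * (r - r₀) := by
      intro n
      have hptw : ∀ s ∈ Set.Ioc r₀ r, ‖Ke r s * H n s‖ ≤ C * (κ ^ n / n.factorial) := by
        intro s hs
        rw [norm_mul]
        exact mul_le_mul (hC s ⟨hs.1.le, hs.2⟩) (hbκ n s ⟨hs.1.le, hs.2.trans hr.2⟩)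
          (norm_nonneg _) hC0
      calc (∫ s in Set.Ioc r₀ r, ‖Ke r s * H n s‖)
          ≤ ∫ _ in Set.Ioc r₀ r, C * (κ ^ n / n.factorial) :=
            setIntegral_mono_on (hIntn n).norm
              (integrableOn_const measure_Ioc_lt_top.ne) measurableSet_Ioc hptw
        _ = C * (κ ^ n / n.factorial) * (r - r₀) := by
            rw [setIntegral_const, Real.volume_real_Ioc_of_le hr.1, smul_eq_mul]
            ring
    have hsummable : Summable fun n => ∫ s in Set.Ioc r₀ r, ‖Ke r s * H n s‖ :=
      Summable.of_nonneg_of_le (fun n => integral_nonneg fun s => norm_nonneg _) hnormle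
        ((hu.mul_left C).mul_right (r - r₀))
    have hinter := MeasureTheory.integral_tsum_of_summable_integral_norm hIntn hsummable
    calc (∫ s in r₀..r, Ke r s * h s) = ∫ s in Set.Ioc r₀ r, Ke r s * h s :=
        intervalIntegral.integral_of_le hr.1
      _ = ∫ s in Set.Ioc r₀ r, ∑' n, Ke r s * H n s := by
        refine setIntegral_congr_fun measurableSet_Ioc fun s _ => ?_
        rw [hh s, ← tsum_mul_left]
      _ = ∑' n, ∫ s in Set.Ioc r₀ r, Ke r s * H n s := hinter.symm
      _ = ∑' n, H (n + 1) r := by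
        refine tsum_congr fun n => ?_
        rw [hHsucc n r, intervalIntegral.integral_of_le hr.1]
      _ = h r - 1 := by
        have h0 := Summable.tsum_eq_zero_add (hsum r hr)
        rw [hh r, h0, hH0]
        ring
  -- assembling the solution
  refine ⟨fun r => g r * h r, hg.mul hhcont, ?_, ?_⟩
  · intro r hr
    have hcongr : (∫ s in r₀..r, K r s * (g s * h s))
        = ∫ s in r₀..r, g r * (Ke r s * h s) := by
      apply intervalIntegral.integral_congr
      intro s hs
      rw [Set.uIcc_of_le hr.1] at hs
      beta_reduce
      rw [f1 r s hs.1 hs.2 hr.2]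
      have hgr : g r ≠ 0 := hg0 r hr
      field_simp
    show g r * h r = g r + ∫ s in r₀..r, K r s * (g s * h s)
    rw [hcongr, intervalIntegral.integral_const_mul, heq r hr]
    ring
  · intro r hr
    have htail : h r - 1 = ∑' n, H (n + 1) r := by
      rw [hh r, Summable.tsum_eq_zero_add (hsum r hr), hH0]
      ring
    have hsuccu : Summable fun n : ℕ => κ ^ (n + 1) / (n + 1).factorial :=
      hu.comp_injective Nat.succ_injective
    have hsummN : Summable fun n => ‖H (n + 1) r‖ :=
      Summable.of_nonneg_of_le (fun n => norm_nonneg _) (fun n => hbκ (n + 1) r hr) hsuccu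
    have hnorm : ‖∑' n, H (n + 1) r‖ ≤ Real.exp κ - 1 := by
      have h1 : ‖∑' n, H (n + 1) r‖ ≤ ∑' n, ‖H (n + 1) r‖ := norm_tsum_le_tsum_norm hsummN
      have h2 : (∑' n, ‖H (n + 1) r‖) ≤ ∑' n : ℕ, κ ^ (n + 1) / (n + 1).factorial :=
        Summable.tsum_le_tsum (fun n => hbκ (n + 1) r hr) hsummN hsuccu
      have h3 : (∑' n : ℕ, κ ^ (n + 1) / (n + 1).factorial) = Real.exp κ - 1 := by
        have hexp : (∑' n : ℕ, κ ^ n / n.factorial) = Real.exp κ := by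
          rw [Real.exp_eq_exp_ℝ, NormedSpace.exp_eq_tsum_div]
        have h0 := Summable.tsum_eq_zero_add hu
        rw [hexp] at h0
        norm_num at h0
        linarith
      linarith
    show ‖g r * h r - g r‖ ≤ (Real.exp κ - 1) * ‖g r‖
    have e1 : g r * h r - g r = g r * (h r - 1) := by ring
    calc ‖g r * h r - g r‖ = ‖g r‖ * ‖h r - 1‖ := by rw [e1, norm_mul]
      _ = ‖g r‖ * ‖∑' n, H (n + 1) r‖ := by rw [htail]
      _ ≤ ‖g r‖ * (Real.exp κ - 1) := mul_le_mul_of_nonneg_left hnorm (norm_nonneg _)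
      _ = (Real.exp κ - 1) * ‖g r‖ := mul_comm _ _
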